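/- Let X ∈ ℝ^{d×n} with n ≥ 1, λ > 0, μ > 0, 0 < p, q < 2, and let Z ∈ ℝ^{n×n} satisfy J(Z, μ) ≤ D for some D > 0. Let M = (ZᵀZ + μ²I)^{p/2−1} and let N be the diagonal matrix with N_{ii} = (‖(XZ − X)_i‖_2² + μ²)^{q/2−1}. Then every eigenvalue of M is at least D^{(p−2)/p} and every diagonal entry of N is at least (D/λ)^{(q−2)/q}; in particular, the smallest eigenvalues of M and N are bounded below by the positive constant θ = min{ D^{(p−2)/p}, (D/λ)^{(q−2)/q} }, which depends only on D, λ, p, q. -/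

import Mathlib

open Matrix

/-- Real power of a real symmetric matrix, defined through the spectral decomposition
`A = U · diag(λ₁,…,λₙ) · Uᵀ` as `A^r = U · diag(λ₁^r,…,λₙ^r) · Uᵀ`
(junk value `0` if `A` is not symmetric). -/
noncomputable def mpow {n : ℕ} (A : Matrix (Fin n) (Fin n) ℝ) (r : ℝ) :
    Matrix (Fin n) (Fin n) ℝ :=
  if hA : A.IsHermitian then hA.cfc (fun x : ℝ => x ^ r) else 0

/-- The smoothed LRR objective
`J(Z, μ) = Tr((ZᵀZ + μ²I)^{p/2}) + λ·∑ᵢ (‖(XZ − X)ᵢ‖₂² + μ²)^{q/2}`,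
where `(XZ − X)ᵢ` denotes the `i`-th column of `XZ − X`. -/
noncomputable def smoothJ {d n : ℕ} (X : Matrix (Fin d) (Fin n) ℝ) (lam p q : ℝ)
    (Z : Matrix (Fin n) (Fin n) ℝ) (μ : ℝ) : ℝ :=
  (mpow (Zᵀ * Z + μ ^ 2 • (1 : Matrix (Fin n) (Fin n) ℝ)) (p / 2)).trace +
    lam * ∑ i, (∑ j, ((X * Z - X) j i) ^ 2 + μ ^ 2) ^ (q / 2)

/-
Every summand of `J` is nonnegative, so `J(Z, μ) ≤ D` bounds each of them by `D`: every
eigenvalue `σ` of `A = ZᵀZ + μ²I` has `σ^{p/2} ≤ D`, and every smoothed column residual `s`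
has `s^{q/2} ≤ D/λ`. Both weights are obtained from these by the exponent `r/2 - 1 ≤ 0`,
and `x^{r/2-1} = (x^{r/2})^{(r-2)/r}` turns the upper bound `x^{r/2} ≤ C` into the lower
bound `C^{(r-2)/r} ≤ x^{r/2-1}`. The eigenvalues of `M = A^{p/2-1}` are exactly the
`σ^{p/2-1}`, and the diagonal entries of `N` are the `s^{q/2-1}`.
-/

lemma Real.rpow_div_le_rpow_half_sub_one {x C r : ℝ} (hx : 0 < x) (hr0 : 0 < r) (hr2 : r ≤ 2)
    (h : x ^ (r / 2) ≤ C) : C ^ ((r - 2) / r) ≤ x ^ (r / 2 - 1) := by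
  have hexp : x ^ (r / 2 - 1) = (x ^ (r / 2)) ^ ((r - 2) / r) := by
    rw [← Real.rpow_mul hx.le]
    congr 1
    field_simp
  rw [hexp]
  exact Real.rpow_le_rpow_of_nonpos (Real.rpow_pos_of_pos hx _) h
    (div_nonpos_of_nonpos_of_nonneg (by linarith) hr0.le)

namespace Matrix

variable {n : ℕ} {A : Matrix (Fin n) (Fin n) ℝ}

lemma posSemidef_transpose_mul_self (Z : Matrix (Fin n) (Fin n) ℝ) : (Zᵀ * Z).PosSemidef := by
  simpa [conjTranspose_eq_transpose_of_trivial] using posSemidef_conjTranspose_mul_self Z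

lemma posSemidef_transpose_mul_self_add_smul_one (Z : Matrix (Fin n) (Fin n) ℝ) {c : ℝ}
    (hc : 0 ≤ c) : (Zᵀ * Z + c • (1 : Matrix (Fin n) (Fin n) ℝ)).PosSemidef := by
  refine (posSemidef_transpose_mul_self Z).add ?_
  rw [smul_one_eq_diagonal]
  exact posSemidef_diagonal_iff.mpr fun _ => hc

lemma posDef_transpose_mul_self_add_smul_one (Z : Matrix (Fin n) (Fin n) ℝ) {c : ℝ}
    (hc : 0 < c) : (Zᵀ * Z + c • (1 : Matrix (Fin n) (Fin n) ℝ)).PosDef := by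
  refine PosDef.posSemidef_add (posSemidef_transpose_mul_self Z) ?_
  rw [smul_one_eq_diagonal]
  exact posDef_diagonal_iff.mpr fun _ => hc

lemma IsHermitian.trace_cfc (hA : A.IsHermitian) (f : ℝ → ℝ) :
    (hA.cfc f).trace = ∑ i, f (hA.eigenvalues i) := by
  rw [IsHermitian.cfc, Unitary.conjStarAlgAut_apply, trace_mul_cycle,
    Unitary.star_mul_self_of_mem (SetLike.coe_mem _), one_mul, trace_diagonal]
  simp

lemma IsHermitian.spectrum_cfc (hA : A.IsHermitian) (f : ℝ → ℝ) :
    spectrum ℝ (hA.cfc f) = Set.range fun i => f (hA.eigenvalues i) := by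
  rw [IsHermitian.cfc, Unitary.conjStarAlgAut_apply, Unitary.spectrum_star_right_conjugate,
    spectrum_diagonal]
  ext x
  simp

lemma IsHermitian.trace_mpow (hA : A.IsHermitian) (r : ℝ) :
    (mpow A r).trace = ∑ i, hA.eigenvalues i ^ r := by
  rw [mpow, dif_pos hA, hA.trace_cfc]

lemma IsHermitian.spectrum_mpow (hA : A.IsHermitian) (r : ℝ) :
    spectrum ℝ (mpow A r) = Set.range fun i => hA.eigenvalues i ^ r := by
  rw [mpow, dif_pos hA, hA.spectrum_cfc]

lemma IsHermitian.exists_eigenvalues_mpow_eq (hA : A.IsHermitian) {r : ℝ}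
    (hAr : (mpow A r).IsHermitian) (i : Fin n) :
    ∃ j, hAr.eigenvalues i = hA.eigenvalues j ^ r := by
  have hmem := hAr.eigenvalues_mem_spectrum_real i
  rw [hA.spectrum_mpow] at hmem
  obtain ⟨j, hj⟩ := hmem
  exact ⟨j, hj.symm⟩

lemma PosSemidef.trace_mpow_nonneg (hA : A.PosSemidef) (r : ℝ) : 0 ≤ (mpow A r).trace := by
  rw [hA.1.trace_mpow]
  exact Finset.sum_nonneg fun k _ => Real.rpow_nonneg (hA.eigenvalues_nonneg k) _

lemma PosSemidef.eigenvalues_rpow_le_trace_mpow (hA : A.PosSemidef) (r : ℝ) (j : Fin n) :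
    hA.1.eigenvalues j ^ r ≤ (mpow A r).trace := by
  rw [hA.1.trace_mpow]
  exact Finset.single_le_sum (fun k _ => Real.rpow_nonneg (hA.eigenvalues_nonneg k) _)
    (Finset.mem_univ j)

end Matrix

section SmoothedObjective

variable {d n : ℕ} {X : Matrix (Fin d) (Fin n) ℝ} {lam p q μ D : ℝ}
  {Z : Matrix (Fin n) (Fin n) ℝ}

lemma eigenvalues_rpow_le_of_smoothJ_le
    (hA : (Zᵀ * Z + μ ^ 2 • (1 : Matrix (Fin n) (Fin n) ℝ)).PosSemidef) (hlam : 0 ≤ lam)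
    (hJD : smoothJ X lam p q Z μ ≤ D) (j : Fin n) :
    hA.1.eigenvalues j ^ (p / 2) ≤ D := by
  have hres : 0 ≤ lam * ∑ i, (∑ j, ((X * Z - X) j i) ^ 2 + μ ^ 2) ^ (q / 2) :=
    mul_nonneg hlam <| Finset.sum_nonneg fun i _ => Real.rpow_nonneg (by positivity) _
  have htr := hA.eigenvalues_rpow_le_trace_mpow (p / 2) j
  unfold smoothJ at hJD
  linarith

lemma column_rpow_le_of_smoothJ_le (hlam : 0 < lam) (hJD : smoothJ X lam p q Z μ ≤ D)
    (i : Fin n) : (∑ j, ((X * Z - X) j i) ^ 2 + μ ^ 2) ^ (q / 2) ≤ D / lam := by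
  have htr := (posSemidef_transpose_mul_self_add_smul_one Z (sq_nonneg μ)).trace_mpow_nonneg
    (p / 2)
  have hcol := Finset.single_le_sum
    (f := fun i => (∑ j, ((X * Z - X) j i) ^ 2 + μ ^ 2) ^ (q / 2))
    (fun i _ => Real.rpow_nonneg (by positivity) _) (Finset.mem_univ i)
  unfold smoothJ at hJD
  rw [le_div_iff₀ hlam]
  nlinarith

end SmoothedObjective

theorem stmt_14_general {d n : ℕ} (X : Matrix (Fin d) (Fin n) ℝ) (lam p q μ D : ℝ)
    (hlam : 0 < lam) (hμ : 0 < μ) (hp0 : 0 < p) (hp2 : p < 2) (hq0 : 0 < q) (hq2 : q < 2)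
    (hD : 0 < D) (Z : Matrix (Fin n) (Fin n) ℝ)
    (hJD : smoothJ X lam p q Z μ ≤ D)
    (M N : Matrix (Fin n) (Fin n) ℝ)
    (hM : M = mpow (Zᵀ * Z + μ ^ 2 • (1 : Matrix (Fin n) (Fin n) ℝ)) (p / 2 - 1))
    (hN : N = Matrix.diagonal fun i => (∑ j, ((X * Z - X) j i) ^ 2 + μ ^ 2) ^ (q / 2 - 1)) :
    (∀ hM' : M.IsHermitian, ∀ i, D ^ ((p - 2) / p) ≤ hM'.eigenvalues i) ∧
      (∀ i, (D / lam) ^ ((q - 2) / q) ≤ N i i) ∧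
      0 < min (D ^ ((p - 2) / p)) ((D / lam) ^ ((q - 2) / q)) := by
  subst hM hN
  have hA := posDef_transpose_mul_self_add_smul_one Z (pow_pos hμ 2)
  refine ⟨fun hM' i => ?_, fun i => ?_, ?_⟩
  · obtain ⟨j, hj⟩ := hA.1.exists_eigenvalues_mpow_eq hM' i
    rw [hj]
    exact Real.rpow_div_le_rpow_half_sub_one (hA.eigenvalues_pos j) hp0 hp2.le
      (eigenvalues_rpow_le_of_smoothJ_le hA.posSemidef hlam.le hJD j)
  · rw [diagonal_apply_eq]
    exact Real.rpow_div_le_rpow_half_sub_one (by positivity) hq0 hq2.le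
      (column_rpow_le_of_smoothJ_le hlam hJD i)
  · exact lt_min (Real.rpow_pos_of_pos hD _) (Real.rpow_pos_of_pos (div_pos hD hlam) _)

/-- Lower bound on the weight matrices: if `J(Z, μ) ≤ D`, then every eigenvalue of
`M = (ZᵀZ + μ²I)^{p/2−1}` is at least `D^{(p−2)/p}`, every diagonal entry of the weight matrix
`N` is at least `(D/λ)^{(q−2)/q}`, and the constant
`θ = min{D^{(p−2)/p}, (D/λ)^{(q−2)/q}}` is positive. -/
theorem stmt_14 {d n : ℕ} (hn : 1 ≤ n) (X : Matrix (Fin d) (Fin n) ℝ) (lam p q μ D : ℝ)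
    (hlam : 0 < lam) (hμ : 0 < μ) (hp0 : 0 < p) (hp2 : p < 2) (hq0 : 0 < q) (hq2 : q < 2)
    (hD : 0 < D) (Z : Matrix (Fin n) (Fin n) ℝ)
    (hJD : smoothJ X lam p q Z μ ≤ D)
    (M N : Matrix (Fin n) (Fin n) ℝ)
    (hM : M = mpow (Zᵀ * Z + μ ^ 2 • (1 : Matrix (Fin n) (Fin n) ℝ)) (p / 2 - 1))
    (hN : N = Matrix.diagonal fun i => (∑ j, ((X * Z - X) j i) ^ 2 + μ ^ 2) ^ (q / 2 - 1)) :
    (∀ hM' : M.IsHermitian, ∀ i, D ^ ((p - 2) / p) ≤ hM'.eigenvalues i) ∧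
      (∀ i, (D / lam) ^ ((q - 2) / q) ≤ N i i) ∧
      0 < min (D ^ ((p - 2) / p)) ((D / lam) ^ ((q - 2) / q)) :=
  stmt_14_general X lam p q μ D hlam hμ hp0 hp2 hq0 hq2 hD Z hJD M N hM hN
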